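/- arXiv:1206.5031 — 2 statements merged into one kernel-verified Lean document; each statement's English description precedes it below -/
import Mathlib

section
/- For all real t ≥ 0, ∑_{n=⌈√t⌉+1}^∞ sin(t/n^2) ≥ t/(⌈√t⌉+1) − (1/30) · t^3/⌈√t⌉^5 (with the convention that for t = 0 the sum starts at n = 1 and both sides are 0). -/
/-!
Write `N = ⌈√t⌉₊`. Summing `sin x ≥ x - x³/6` over the terms gives
`∑ sin(t/n²) ≥ t ∑ 1/n² - (t³/6) ∑ 1/n⁶` (sums over `n > N`), and both tails are controlled by
telescoping: `1/n² ≥ 1/n - 1/(n+1)` and `1/n⁶ ≤ (1/5) (1/(n-1)⁵ - 1/n⁵)`. This works for any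
real shift `a > 0` in place of `N`; only the case `t = 0` (where `N = 0`) needs separate care.
-/

open Real Filter Topology

lemma hasSum_sub_succ_of_antitone {h : ℕ → ℝ} (hh : Antitone h)
    (hlim : Tendsto h atTop (𝓝 0)) : HasSum (fun k => h k - h (k + 1)) (h 0) := by
  rw [hasSum_iff_tendsto_nat_of_nonneg (fun k => sub_nonneg.2 (hh k.le_succ))]
  simp_rw [Finset.sum_range_sub']
  simpa using tendsto_const_nhds.sub hlim

lemma Summable.sin {ι : Type*} {f : ι → ℝ} (hf : Summable f) :
    Summable fun i => Real.sin (f i) :=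
  hf.abs.of_norm_bounded fun _ => abs_sin_le_abs

lemma summable_one_div_add_nat_pow {a : ℝ} (ha : 0 ≤ a) {p : ℕ} (hp : 1 < p) :
    Summable fun k : ℕ => 1 / (a + k) ^ p := by
  have := (Real.summable_one_div_nat_add_rpow a p).2 (by exact_mod_cast hp)
  refine this.congr fun k => ?_
  rw [abs_of_nonneg (by positivity), Real.rpow_natCast, add_comm]

lemma tendsto_add_nat_atTop (a : ℝ) : Tendsto (fun k : ℕ => a + k) atTop atTop :=
  tendsto_atTop_add_const_left _ a tendsto_natCast_atTop_atTop

lemma one_div_le_tsum_one_div_add_nat_sq {a : ℝ} (ha : 0 < a) :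
    1 / a ≤ ∑' k : ℕ, 1 / (a + k) ^ 2 := by
  have htel := hasSum_sub_succ_of_antitone (h := fun k : ℕ => 1 / (a + k))
    (fun i j hij => by dsimp only; gcongr) ((tendsto_add_nat_atTop a).const_div_atTop 1)
  simp only [Nat.cast_zero, add_zero] at htel
  rw [← htel.tsum_eq]
  refine htel.summable.tsum_le_tsum (fun k => ?_) (summable_one_div_add_nat_pow ha.le one_lt_two)
  have hv : 0 < a + k := by positivity
  push_cast
  rw [div_sub_div _ _ hv.ne' (by positivity), div_le_div_iff₀ (by positivity) (by positivity)]
  nlinarith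

lemma one_div_add_one_pow_six_le {v : ℝ} (hv : 0 < v) :
    1 / (v + 1) ^ 6 ≤ 1 / (5 * v ^ 5) - 1 / (5 * (v + 1) ^ 5) := by
  have key : 5 * v ^ 5 ≤ ((v + 1) ^ 5 - v ^ 5) * (v + 1) := by
    nlinarith [pow_pos hv 2, pow_pos hv 3, pow_pos hv 4]
  rw [div_sub_div _ _ (by positivity) (by positivity), div_le_div_iff₀ (by positivity) (by positivity)]
  nlinarith [mul_le_mul_of_nonneg_right key (by positivity : (0 : ℝ) ≤ 25 * (v + 1) ^ 5)]

lemma tsum_one_div_add_one_add_nat_pow_six_le {a : ℝ} (ha : 0 < a) :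
    ∑' k : ℕ, 1 / (a + 1 + k) ^ 6 ≤ 1 / (5 * a ^ 5) := by
  have htel := hasSum_sub_succ_of_antitone (h := fun k : ℕ => 1 / (5 * (a + k) ^ 5))
    (fun i j hij => by dsimp only; gcongr)
    ((((tendsto_pow_atTop (by norm_num : 5 ≠ 0)).comp (tendsto_add_nat_atTop a)).const_mul_atTop
      (by norm_num : (0 : ℝ) < 5)).const_div_atTop 1)
  simp only [Nat.cast_zero, add_zero] at htel
  rw [← htel.tsum_eq]
  refine (summable_one_div_add_nat_pow (by positivity) (by norm_num)).tsum_le_tsum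
    (fun k => ?_) htel.summable
  rw [Nat.cast_succ, ← add_assoc, add_right_comm]
  exact one_div_add_one_pow_six_le (by positivity)

theorem sub_le_tsum_sin_div_add_one_add_nat_sq {a t : ℝ} (ha : 0 < a) (ht : 0 ≤ t) :
    t / (a + 1) - t ^ 3 / (30 * a ^ 5) ≤ ∑' k : ℕ, Real.sin (t / (a + 1 + k) ^ 2) := by
  have hsq := summable_one_div_add_nat_pow (a := a + 1) (by positivity) one_lt_two
  have hsix := summable_one_div_add_nat_pow (a := a + 1) (by positivity) (by norm_num : 1 < 6)
  have hsin : Summable fun k : ℕ => Real.sin (t / (a + 1 + k) ^ 2) := by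
    simpa only [mul_one_div] using (hsq.mul_left t).sin
  calc t / (a + 1) - t ^ 3 / (30 * a ^ 5)
      = t * (1 / (a + 1)) - t ^ 3 / 6 * (1 / (5 * a ^ 5)) := by ring
    _ ≤ t * ∑' k : ℕ, 1 / (a + 1 + k) ^ 2 - t ^ 3 / 6 * ∑' k : ℕ, 1 / (a + 1 + k) ^ 6 := by
      gcongr
      · exact one_div_le_tsum_one_div_add_nat_sq (by positivity)
      · exact tsum_one_div_add_one_add_nat_pow_six_le ha
    _ = ∑' k : ℕ, (t * (1 / (a + 1 + k) ^ 2) - t ^ 3 / 6 * (1 / (a + 1 + k) ^ 6)) := by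
      rw [(hsq.mul_left t).tsum_sub (hsix.mul_left _), tsum_mul_left, tsum_mul_left]
    _ ≤ ∑' k : ℕ, Real.sin (t / (a + 1 + k) ^ 2) := by
      refine ((hsq.mul_left t).sub (hsix.mul_left _)).tsum_le_tsum (fun k => ?_) hsin
      refine le_trans (le_of_eq ?_) (sin_ge_sub_cube (x := t / (a + 1 + k) ^ 2) (by positivity))
      rw [div_pow, ← pow_mul]
      ring

/-- For `t ≥ 0`, with `N = ⌈√t⌉`,
`∑_{n=N+1}^∞ sin(t/n²) ≥ t/(N+1) − (1/30)·t³/N⁵`. -/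
theorem stmt_4 (t : ℝ) (ht : 0 ≤ t) :
    (∑' n : ℕ, Real.sin (t / ((⌈Real.sqrt t⌉₊ + 1 + n : ℕ) : ℝ) ^ 2))
      ≥ t / ((⌈Real.sqrt t⌉₊ : ℝ) + 1)
        - (1 / 30) * t ^ 3 / ((⌈Real.sqrt t⌉₊ : ℝ)) ^ 5 := by
  rcases ht.eq_or_lt with rfl | htpos
  · simp
  have hN : (0 : ℝ) < ⌈√t⌉₊ := Nat.cast_pos.2 (Nat.ceil_pos.2 (sqrt_pos.2 htpos))
  push_cast
  convert sub_le_tsum_sin_div_add_one_add_nat_sq hN ht using 2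
  ring
end

section
/- For p > 1, the function t ↦ ΔS_p(t) := ∑_{n=1}^∞ sin(t/n^p) − α_p t^{1/p} (for t > 0) does not tend to 0 as t → ∞, where α_p = Γ(1−1/p) sin(π/(2p)). -/
/-!
Pair `ΔS_p` with `sin t` and average over `[0, T]`: if `ΔS_p → 0`, these means tend to `0`.
But the term `n = 1` of the series contributes `(1/T) ∫₀ᵀ sin² t → 1/2`; every other term has
a frequency `ω = n^{-p} ≤ 1/2` away from `1`, so its integral against `sin t` is
`O(min(1, ω (1 + T)))` and, by dominated convergence, the remaining terms contribute `o(1)`; finally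
`∫₀ᵀ t^{1/p} sin t = O(T^{1/p}) = o(T)` by integration by parts. So the means tend to `1/2`.
-/

open Real Filter Topology MeasureTheory intervalIntegral

theorem tendsto_integral_div_of_tendsto_zero {g : ℝ → ℝ}
    (hg : ∀ T, IntervalIntegrable g volume 0 T) (h : Tendsto g atTop (𝓝 0)) :
    Tendsto (fun T => (∫ t in 0..T, g t) / T) atTop (𝓝 0) := by
  rw [Metric.tendsto_nhds]
  intro ε hε
  obtain ⟨M, hM⟩ := eventually_atTop.1
    ((eventually_ge_atTop 0).and (Metric.tendsto_nhds.1 h (ε / 2) (half_pos hε)))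
  have hM0 : 0 ≤ M := (hM M le_rfl).1
  set C := |∫ t in 0..M, g t|
  filter_upwards [eventually_gt_atTop (max M (max 0 (2 * C / ε)))] with T hT
  simp only [max_lt_iff] at hT
  obtain ⟨hMT, hT0, hCT⟩ := hT
  have htail : |∫ t in M..T, g t| ≤ ε / 2 * (T - M) := by
    refine (intervalIntegral.norm_integral_le_of_norm_le_const (f := g) fun t ht => ?_).trans_eq
      (by rw [abs_of_pos (sub_pos.2 hMT)])
    simpa [Real.dist_eq] using (hM t (Set.uIoc_of_le hMT.le ▸ ht).1.le).2.le
  have hC : C < ε / 2 * T := by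
    rw [div_lt_iff₀ hε] at hCT
    linarith
  rw [Real.dist_eq, sub_zero, abs_div, abs_of_pos hT0, div_lt_iff₀ hT0,
    ← integral_add_adjacent_intervals (hg M) ((hg M).symm.trans (hg T))]
  calc _ ≤ C + |∫ t in M..T, g t| := abs_add_le _ _
    _ < ε * T := by nlinarith

theorem abs_sin_mul_le (a t : ℝ) : |sin (a * t)| ≤ |a| * |t| :=
  abs_sin_le_abs.trans_eq (abs_mul a t)

theorem tendsto_div_atTop_of_abs_le {f : ℝ → ℝ} {C : ℝ} (h : ∀ T, |f T| ≤ C) :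
    Tendsto (fun T => f T / T) atTop (𝓝 0) := by
  simpa [div_eq_inv_mul] using
    tendsto_inv_atTop_zero.zero_mul_isBoundedUnder_le (isBoundedUnder_of ⟨C, h⟩)

theorem integral_sin_mul_mul_sin {ω : ℝ} (hω : ω ^ 2 ≠ 1) (T : ℝ) :
    ∫ t in 0..T, sin (ω * t) * sin t
      = (ω * sin T * cos (ω * T) - cos T * sin (ω * T)) / (1 - ω ^ 2) := by
  have hderiv : ∀ t, HasDerivAt
      (fun t => (ω * sin t * cos (ω * t) - cos t * sin (ω * t)) / (1 - ω ^ 2))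
      (sin (ω * t) * sin t) t := by
    intro t
    have hωt : HasDerivAt (fun t => ω * t) ω t := by simpa using (hasDerivAt_id t).const_mul ω
    refine ((((hasDerivAt_sin t).const_mul ω).mul hωt.cos).sub
      ((hasDerivAt_cos t).mul hωt.sin)).div_const (1 - ω ^ 2) |>.congr_deriv ?_
    rw [div_eq_iff (sub_ne_zero.2 (Ne.symm hω))]
    ring
  rw [integral_eq_sub_of_hasDerivAt (fun t _ => hderiv t)
    ((by fun_prop : Continuous fun t => sin (ω * t) * sin t).intervalIntegrable _ _)]
  simp

theorem abs_integral_sin_mul_mul_sin_le {ω : ℝ} (h0 : 0 ≤ ω) (h1 : ω ≤ 1 / 2) (T : ℝ) :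
    |∫ t in 0..T, sin (ω * t) * sin t| ≤ 2 * (ω + |sin (ω * T)|) := by
  have hnum : |ω * sin T * cos (ω * T) - cos T * sin (ω * T)| ≤ ω + |sin (ω * T)| := by
    calc _ ≤ |ω * sin T * cos (ω * T)| + |cos T * sin (ω * T)| := abs_sub _ _
      _ ≤ ω * 1 * 1 + 1 * |sin (ω * T)| := by
        simp only [abs_mul, abs_of_nonneg h0]
        gcongr <;> first | exact abs_sin_le_one _ | exact abs_cos_le_one _
      _ = ω + |sin (ω * T)| := by ring
  have hden : 1 / 2 ≤ 1 - ω ^ 2 := by nlinarith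
  rw [integral_sin_mul_mul_sin (by nlinarith) T, abs_div, abs_of_pos (by linarith : 0 < 1 - ω ^ 2),
    div_le_iff₀ (by linarith)]
  nlinarith [abs_nonneg (sin (ω * T))]

theorem abs_integral_rpow_mul_sin_le {q : ℝ} (hq : 0 < q) {T : ℝ} (hT : 0 ≤ T) :
    |∫ t in 0..T, t ^ q * sin t| ≤ 2 * T ^ q := by
  have hu' : IntervalIntegrable (fun t => q * t ^ (q - 1)) volume 0 T :=
    (intervalIntegrable_rpow' (by linarith)).const_mul q
  have hparts := integral_mul_deriv_eq_deriv_mul_of_hasDerivAt (u := fun t => t ^ q)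
    (v := fun t => -cos t) (continuous_rpow_const hq.le).continuousOn (by fun_prop)
    (fun x hx => hasDerivAt_rpow_const (Or.inl (by rw [min_eq_left hT] at hx; exact hx.1.ne')))
    (fun x _ => by simpa using (hasDerivAt_cos x).fun_neg) hu'
    (continuous_sin.intervalIntegrable _ _)
  have hrem : |∫ t in 0..T, q * t ^ (q - 1) * -cos t| ≤ T ^ q := by
    calc _ ≤ ∫ t in 0..T, q * t ^ (q - 1) := by
          refine norm_integral_le_of_norm_le (f := fun t => q * t ^ (q - 1) * -cos t) hT
            (ae_of_all _ fun t ht => ?_) hu'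
          have : 0 ≤ q * t ^ (q - 1) := mul_nonneg hq.le (rpow_nonneg ht.1.le _)
          rw [Real.norm_eq_abs, abs_mul, abs_neg, abs_of_nonneg this]
          exact mul_le_of_le_one_right this (abs_cos_le_one t)
      _ = T ^ q := by
          rw [intervalIntegral.integral_const_mul, integral_rpow (Or.inl (by linarith))]
          simp [zero_rpow hq.ne', mul_div_cancel₀ _ hq.ne']
  rw [hparts, zero_rpow hq.ne', zero_mul, sub_zero]
  calc _ ≤ |T ^ q * -cos T| + |∫ t in 0..T, q * t ^ (q - 1) * -cos t| := abs_sub _ _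
    _ ≤ T ^ q * 1 + T ^ q := by
        rw [abs_mul, abs_neg, abs_of_nonneg (rpow_nonneg hT q)]
        gcongr
        exact abs_cos_le_one T
    _ = 2 * T ^ q := by ring

noncomputable def sinMean (f : ℝ → ℝ) (T : ℝ) : ℝ := (∫ t in 0..T, f t * sin t) / T

theorem sinMean_add {f g : ℝ → ℝ} (hf : Continuous f) (hg : Continuous g) (T : ℝ) :
    sinMean (fun t => f t + g t) T = sinMean f T + sinMean g T := by
  simp only [sinMean, add_mul]
  rw [intervalIntegral.integral_add, add_div]
  exacts [(hf.mul continuous_sin).intervalIntegrable _ _,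
    (hg.mul continuous_sin).intervalIntegrable _ _]

theorem sinMean_sub {f g : ℝ → ℝ} (hf : Continuous f) (hg : Continuous g) (T : ℝ) :
    sinMean (fun t => f t - g t) T = sinMean f T - sinMean g T := by
  simp only [sinMean, sub_mul]
  rw [intervalIntegral.integral_sub, sub_div]
  exacts [(hf.mul continuous_sin).intervalIntegrable _ _,
    (hg.mul continuous_sin).intervalIntegrable _ _]

theorem sinMean_const_mul (c : ℝ) (f : ℝ → ℝ) (T : ℝ) :
    sinMean (fun t => c * f t) T = c * sinMean f T := by
  simp only [sinMean, mul_assoc, intervalIntegral.integral_const_mul, mul_div_assoc]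

theorem tendsto_sinMean_of_tendsto_zero {f : ℝ → ℝ} (hf : Continuous f)
    (h : Tendsto f atTop (𝓝 0)) : Tendsto (sinMean f) atTop (𝓝 0) :=
  tendsto_integral_div_of_tendsto_zero (fun _ => (hf.mul continuous_sin).intervalIntegrable _ _)
    (h.zero_mul_isBoundedUnder_le (isBoundedUnder_of ⟨1, fun t => abs_sin_le_one t⟩))

theorem tendsto_sinMean_sin : Tendsto (sinMean sin) atTop (𝓝 (1 / 2)) := by
  have hmean : ∀ T ≠ 0, sinMean sin T = 1 / 2 - sin T * cos T / 2 / T := by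
    intro T hT
    rw [sinMean, ← integral_congr (fun t _ => sq (sin t)), integral_sin_sq]
    field_simp
    simp only [sin_zero, zero_mul, zero_sub]
    ring
  have hosc := tendsto_div_atTop_of_abs_le (f := fun T => sin T * cos T / 2) (C := 1) fun T => by
    rw [abs_div, abs_mul, abs_two, div_le_one two_pos]
    nlinarith [abs_sin_le_one T, abs_cos_le_one T, abs_nonneg (sin T), abs_nonneg (cos T)]
  simpa using (tendsto_const_nhds (x := (1 / 2 : ℝ))).sub hosc |>.congr'
    ((eventually_ne_atTop 0).mono fun T hT => (hmean T hT).symm)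

theorem tendsto_sinMean_rpow {q : ℝ} (hq0 : 0 < q) (hq1 : q < 1) :
    Tendsto (sinMean fun t => t ^ q) atTop (𝓝 0) := by
  have hlim : Tendsto (fun T : ℝ => 2 * T ^ (q - 1)) atTop (𝓝 0) := by
    simpa using (tendsto_rpow_neg_atTop (by linarith : 0 < 1 - q)).const_mul 2
  refine squeeze_zero_norm' (a := fun T => 2 * T ^ (q - 1)) ?_ hlim
  · filter_upwards [eventually_gt_atTop 0] with T hT
    rw [sinMean, Real.norm_eq_abs, abs_div, abs_of_pos hT, rpow_sub_one hT.ne', ← mul_div_assoc]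
    exact div_le_div_of_nonneg_right (abs_integral_rpow_mul_sin_le hq0 hT.le) hT.le

section FrequencySeries

variable {ω : ℕ → ℝ}

theorem summable_sin_mul (hω : Summable ω) (t : ℝ) : Summable fun n => sin (ω n * t) :=
  Summable.of_norm_bounded (hω.abs.mul_right |t|) fun _ => abs_sin_mul_le _ _

theorem continuous_tsum_sin_mul (hω : Summable ω) : Continuous fun t => ∑' n, sin (ω n * t) := by
  refine continuous_iff_continuousAt.2 fun x => ?_
  refine (continuousOn_tsum (s := Set.Icc (x - 1) (x + 1)) (fun _ => by fun_prop)
    (hω.abs.mul_right (|x| + 1)) fun n t ht => ?_).continuousAt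
    (Icc_mem_nhds (by linarith) (by linarith))
  refine (abs_sin_mul_le _ _).trans (mul_le_mul_of_nonneg_left ?_ (abs_nonneg _))
  rw [abs_le] at *
  constructor <;> linarith [ht.1, ht.2, neg_abs_le x, le_abs_self x]

theorem hasSum_integral_sin_mul_mul_sin (hω : Summable ω) (T : ℝ) :
    HasSum (fun n => ∫ t in 0..T, sin (ω n * t) * sin t)
      (∫ t in 0..T, (∑' n, sin (ω n * t)) * sin t) := by
  refine intervalIntegral.hasSum_integral_of_dominated_convergence (fun n _ => |ω n| * |T|)
    (fun n => (by fun_prop : Continuous fun t => sin (ω n * t) * sin t).aestronglyMeasurable)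
    (fun n => ae_of_all _ fun t ht => ?_) (ae_of_all _ fun _ _ => hω.abs.mul_right _)
    intervalIntegrable_const
    (ae_of_all _ fun t _ => (summable_sin_mul hω t).hasSum.mul_right (sin t))
  have ht' : |t| ≤ |T| := by
    simpa using Set.abs_sub_left_of_mem_uIcc (Set.uIoc_subset_uIcc ht)
  calc ‖sin (ω n * t) * sin t‖ ≤ |ω n| * |t| * 1 := by
        rw [Real.norm_eq_abs, abs_mul]
        exact mul_le_mul (abs_sin_mul_le _ _) (abs_sin_le_one t) (abs_nonneg _) (by positivity)
    _ ≤ |ω n| * |T| := by rw [mul_one]; gcongr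

theorem tendsto_sinMean_tsum_sin_mul (hω : Summable ω) (h0 : ∀ n, 0 ≤ ω n)
    (h1 : ∀ n, ω n ≤ 1 / 2) :
    Tendsto (sinMean fun t => ∑' n, sin (ω n * t)) atTop (𝓝 0) := by
  have hmean : sinMean (fun t => ∑' n, sin (ω n * t))
      = fun T => ∑' n, (∫ t in 0..T, sin (ω n * t) * sin t) / T :=
    funext fun T => ((hasSum_integral_sin_mul_mul_sin hω T).div_const T).tsum_eq.symm
  have hterm (n : ℕ) :
      Tendsto (fun T => (∫ t in 0..T, sin (ω n * t) * sin t) / T) atTop (𝓝 0) :=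
    tendsto_div_atTop_of_abs_le (C := 3) fun T => by
      linarith [abs_integral_sin_mul_mul_sin_le (h0 n) (h1 n) T, abs_sin_le_one (ω n * T), h1 n]
  have hdom : ∀ᶠ T in atTop, ∀ n, ‖(∫ t in 0..T, sin (ω n * t) * sin t) / T‖ ≤ 4 * ω n := by
    filter_upwards [eventually_ge_atTop 1] with T hT n
    have hsin : |sin (ω n * T)| ≤ ω n * T := by
      simpa [abs_of_nonneg (h0 n), abs_of_nonneg (zero_le_one.trans hT)] using
        abs_sin_mul_le (ω n) T
    rw [Real.norm_eq_abs, abs_div, abs_of_pos (zero_lt_one.trans_le hT), div_le_iff₀ (by linarith)]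
    nlinarith [abs_integral_sin_mul_mul_sin_le (h0 n) (h1 n) T, h0 n]
  rw [hmean]
  simpa using tendsto_tsum_of_dominated_convergence (hω.mul_left 4) hterm hdom

end FrequencySeries

section Exponent

variable {p : ℝ}

theorem summable_inv_add_two_rpow (hp : 1 < p) : Summable fun n : ℕ => ((n + 2 : ℝ) ^ p)⁻¹ := by
  simpa [add_assoc, one_add_one_eq_two] using
    (summable_nat_add_iff 2).2 (summable_nat_rpow_inv.2 hp)

theorem inv_add_two_rpow_le_half (hp : 1 ≤ p) (n : ℕ) : ((n + 2 : ℝ) ^ p)⁻¹ ≤ 1 / 2 := by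
  have h2 : (2 : ℝ) ≤ (n + 2) ^ p := by
    calc (2 : ℝ) ≤ (n + 2) ^ (1 : ℝ) := by rw [rpow_one]; linarith [n.cast_nonneg (α := ℝ)]
      _ ≤ (n + 2) ^ p := rpow_le_rpow_of_exponent_le (by linarith [n.cast_nonneg (α := ℝ)]) hp
  simpa [one_div] using inv_anti₀ two_pos h2

theorem tsum_sin_div_add_one_rpow (hp : 1 < p) (t : ℝ) :
    ∑' n : ℕ, sin (t / ((n : ℝ) + 1) ^ p) = sin t + ∑' n : ℕ, sin (((n + 2 : ℝ) ^ p)⁻¹ * t) := by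
  have hshift : (fun n : ℕ => sin (t / ((n + 1 : ℕ) + 1 : ℝ) ^ p))
      = fun n : ℕ => sin (((n + 2 : ℝ) ^ p)⁻¹ * t) := by
    ext n
    rw [div_eq_inv_mul]
    push_cast
    ring_nf
  rw [((summable_nat_add_iff 1).1
    (hshift ▸ summable_sin_mul (summable_inv_add_two_rpow hp) t)).tsum_eq_zero_add, hshift]
  simp

end Exponent

/-- For `p > 1`, `ΔS_p(t) = S_p(t) − α_p t^{1/p}` does not tend to `0` as `t → ∞`. -/
theorem stmt_18 (p : ℝ) (hp : 1 < p) :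
    ¬ Tendsto (fun t : ℝ =>
        (∑' n : ℕ, Real.sin (t / ((n : ℝ) + 1) ^ p))
          - Real.Gamma (1 - 1 / p) * Real.sin (π / (2 * p)) * t ^ (1 / p))
      atTop (nhds 0) := by
  simp_rw [tsum_sin_div_add_one_rpow hp]
  intro h
  set c := Gamma (1 - 1 / p) * sin (π / (2 * p))
  set ω : ℕ → ℝ := fun n => ((n + 2 : ℝ) ^ p)⁻¹
  have hω : Summable ω := summable_inv_add_two_rpow hp
  have hq0 : 0 < 1 / p := by positivity
  have hq1 : 1 / p < 1 := (div_lt_one (by linarith)).2 hp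
  have hR := continuous_tsum_sin_mul hω
  have hrpow : Continuous fun t : ℝ => t ^ (1 / p) := continuous_rpow_const hq0.le
  have hmean_zero := tendsto_sinMean_of_tendsto_zero (by fun_prop) h
  have hmean_half : Tendsto (sinMean fun t => sin t + ∑' n, sin (ω n * t) - c * t ^ (1 / p))
      atTop (𝓝 (1 / 2)) := by
    have hlim := (tendsto_sinMean_sin.add (tendsto_sinMean_tsum_sin_mul hω (fun _ => by positivity)
      (inv_add_two_rpow_le_half hp.le))).sub ((tendsto_sinMean_rpow hq0 hq1).const_mul c)
    rw [add_zero, mul_zero, sub_zero] at hlim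
    refine hlim.congr fun T => ?_
    rw [sinMean_sub (by fun_prop) (by fun_prop), sinMean_add continuous_sin hR, sinMean_const_mul]
  exact one_half_pos.ne' (tendsto_nhds_unique hmean_half hmean_zero)
end
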